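/- arXiv:2603.01112 — 2 statements merged into one kernel-verified Lean document; each statement's English description precedes it below -/
import Mathlib

section
/- Li₂(√2 − 1) − Li₂(1 − √2) = π²/8 − (1/2)·log²(√2 + 1), where Li₂ is the dilogarithm. -/
open Real Filter Set Topology

/-- The dilogarithm `Li₂(x) = ∑_{n≥1} xⁿ/n²`. -/
noncomputable def li2 (x : ℝ) : ℝ := ∑' n : ℕ, x ^ (n + 1) / ((n : ℝ) + 1) ^ 2

lemma sum_inv_sq : Summable (fun n : ℕ => 1 / ((n : ℝ) + 1) ^ 2) := by
  have := (summable_nat_add_iff (f := fun n : ℕ => 1 / (n : ℝ) ^ 2) 1).2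
    (Real.summable_one_div_nat_pow.2 one_lt_two)
  simpa using this

lemma li2_bound {x : ℝ} (hx : |x| ≤ 1) (n : ℕ) :
    ‖x ^ (n + 1) / ((n : ℝ) + 1) ^ 2‖ ≤ 1 / ((n : ℝ) + 1) ^ 2 := by
  have h1 : (0:ℝ) < ((n : ℝ) + 1) ^ 2 := by positivity
  rw [norm_div, norm_pow, Real.norm_eq_abs, Real.norm_eq_abs, abs_of_pos h1]
  gcongr
  exact pow_le_one₀ (abs_nonneg x) hx

lemma li2_summable {x : ℝ} (hx : |x| ≤ 1) :
    Summable (fun n : ℕ => x ^ (n + 1) / ((n : ℝ) + 1) ^ 2) :=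
  Summable.of_norm_bounded sum_inv_sq (li2_bound hx)

lemma li2_continuousOn : ContinuousOn li2 (Icc (-1 : ℝ) 1) := by
  apply continuousOn_tsum (u := fun n : ℕ => 1 / ((n : ℝ) + 1) ^ 2)
    (fun i => (continuous_pow _).continuousOn.div_const _) sum_inv_sq
  intro n x hx
  exact li2_bound (abs_le.2 ⟨hx.1, hx.2⟩) n

lemma li2_zero : li2 0 = 0 := by
  simp [li2]

lemma li2_hasDerivAt {x : ℝ} (hx : |x| < 1) :
    HasDerivAt li2 (∑' n : ℕ, x ^ n / ((n : ℝ) + 1)) x := by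
  set r : ℝ := (1 + |x|) / 2 with hr
  have hr0 : 0 ≤ r := by positivity
  have hxr : |x| < r := by rw [hr]; linarith
  have hr1 : r < 1 := by rw [hr]; linarith [abs_nonneg x]
  have := hasDerivAt_tsum_of_isPreconnected
    (u := fun n : ℕ => r ^ n)
    (g := fun (n : ℕ) (y : ℝ) => y ^ (n + 1) / ((n : ℝ) + 1) ^ 2)
    (g' := fun (n : ℕ) (y : ℝ) => y ^ n / ((n : ℝ) + 1))
    (summable_geometric_of_lt_one hr0 hr1)
    (isOpen_Ioo (a := -r) (b := r)) (convex_Ioo _ _).isPreconnected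
    (fun n y _ => ?_) (fun n y hy => ?_) (y₀ := 0) (y := x) ?_ ?_ ?_
  · exact this
  · -- HasDerivAt (fun y => y^(n+1)/((n:ℝ)+1)^2) (y^n/((n:ℝ)+1)) y
    have h := (hasDerivAt_pow (n + 1) y).div_const (((n : ℝ) + 1) ^ 2)
    refine h.congr_deriv ?_
    have hn : ((n : ℝ) + 1) ≠ 0 := by positivity
    push_cast
    field_simp
  · -- bound
    have hy : |y| ≤ r := by
      rw [abs_le]; exact ⟨hy.1.le, hy.2.le⟩
    have h1 : (1:ℝ) ≤ (n : ℝ) + 1 := by simp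
    rw [Real.norm_eq_abs, abs_div]
    show |y ^ n| / |(n : ℝ) + 1| ≤ r ^ n
    calc |y ^ n| / |(n : ℝ) + 1| ≤ |y| ^ n / 1 := by
          rw [abs_pow]
          gcongr
          rw [abs_of_pos (by positivity : (0:ℝ) < (n:ℝ)+1)]; exact h1
      _ ≤ r ^ n := by rw [div_one]; exact pow_le_pow_left₀ (abs_nonneg y) hy n
  · exact mem_Ioo.2 ⟨by linarith [neg_abs_le x, abs_nonneg x], by linarith [abs_nonneg x]⟩
  · exact li2_summable (by simp : |(0:ℝ)| ≤ 1)
  · exact mem_Ioo.2 (abs_lt.1 hxr)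

lemma tsum_deriv_eq {x : ℝ} (hx : |x| < 1) (hx0 : x ≠ 0) :
    ∑' n : ℕ, x ^ n / ((n : ℝ) + 1) = -Real.log (1 - x) / x := by
  have h := (Real.hasSum_pow_div_log_of_abs_lt_one hx).div_const x
  refine HasSum.tsum_eq ?_
  refine h.congr_fun ?_
  intro n
  rw [pow_succ]
  field_simp

lemma hasSum_odd_inv_sq :
    HasSum (fun k : ℕ => (1:ℝ) / (2 * (k:ℝ) + 1) ^ 2) (π ^ 2 / 8) := by
  have hz : HasSum (fun n : ℕ => (1:ℝ) / (n : ℝ) ^ 2) (π ^ 2 / 6) := hasSum_zeta_two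
  have he : HasSum (fun k : ℕ => (1:ℝ) / ((2 * k : ℕ) : ℝ) ^ 2) (π ^ 2 / 24) := by
    have h4 := hz.mul_left (1/4 : ℝ)
    have heq : (fun k : ℕ => (1:ℝ) / ((2 * k : ℕ) : ℝ) ^ 2)
        = fun k : ℕ => 1/4 * ((1:ℝ) / (k:ℝ) ^ 2) := by
      funext k
      push_cast
      rcases Nat.eq_zero_or_pos k with rfl | hk
      · simp
      · have hk0 : ((k:ℝ)) ≠ 0 := by positivity
        field_simp
        ring
    rw [heq]
    rw [show π ^ 2 / 24 = 1/4 * (π ^ 2 / 6) by ring]; exact h4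
  have hodd : Summable (fun k : ℕ => (1:ℝ) / ((2 * k + 1 : ℕ) : ℝ) ^ 2) := by
    apply Summable.of_nonneg_of_le (fun k => by positivity)
      (fun k => ?_) (by simpa using li2_summable (x := 1) (by norm_num))
    push_cast
    rw [one_div]
    gcongr
    linarith [Nat.cast_nonneg (α := ℝ) k]
  have hsum := HasSum.even_add_odd (f := fun n : ℕ => (1:ℝ) / (n : ℝ) ^ 2) he hodd.hasSum
  have huniq := hz.unique hsum
  have hval : ∑' k : ℕ, (1:ℝ) / ((2 * k + 1 : ℕ) : ℝ) ^ 2 = π ^ 2 / 8 := by linarith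
  have hfin : HasSum (fun k : ℕ => (1:ℝ) / ((2 * k + 1 : ℕ) : ℝ) ^ 2) (π ^ 2 / 8) := by
    rw [← hval]; exact hodd.hasSum
  have heq2 : (fun k : ℕ => (1:ℝ) / (2 * (k:ℝ) + 1) ^ 2)
      = fun k : ℕ => (1:ℝ) / ((2 * k + 1 : ℕ) : ℝ) ^ 2 := by
    funext k; push_cast; ring_nf
  rw [heq2]
  exact hfin

lemma g_one : li2 1 - li2 (-1) = π ^ 2 / 4 := by
  have hs1 := li2_summable (x := 1) (by norm_num)
  have hs2 := li2_summable (x := -1) (by norm_num)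
  rw [li2, li2, ← Summable.tsum_sub hs1 hs2]
  set F : ℕ → ℝ := fun n =>
    (1:ℝ) ^ (n + 1) / ((n : ℝ) + 1) ^ 2 - (-1:ℝ) ^ (n + 1) / ((n : ℝ) + 1) ^ 2 with hF
  have heven : HasSum (fun k : ℕ => F (2 * k)) (π ^ 2 / 4) := by
    have h := hasSum_odd_inv_sq.mul_left 2
    have heq : (fun k : ℕ => F (2 * k)) = fun k : ℕ => 2 * ((1:ℝ) / (2 * (k:ℝ) + 1) ^ 2) := by
      funext k
      have hodd : Odd (2 * k + 1) := ⟨k, by ring⟩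
      simp only [hF, one_pow, hodd.neg_one_pow]
      push_cast
      ring
    rw [heq]
    rw [show π ^ 2 / 4 = 2 * (π ^ 2 / 8) by ring]; exact h
  have hoddsum : HasSum (fun k : ℕ => F (2 * k + 1)) 0 := by
    have heq : (fun k : ℕ => F (2 * k + 1)) = fun _ : ℕ => (0:ℝ) := by
      funext k
      have hev : Even (2 * k + 1 + 1) := ⟨k + 1, by ring⟩
      simp [hF, hev.neg_one_pow]
    rw [heq]
    exact hasSum_zero
  have h := HasSum.even_add_odd (f := F) heven hoddsum
  rw [add_zero] at h
  exact h.tsum_eq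

noncomputable def gg (x : ℝ) : ℝ := li2 x - li2 (-x)

lemma gg_hasDerivAt {x : ℝ} (hx : |x| < 1) (hx0 : x ≠ 0) :
    HasDerivAt gg ((Real.log (1 + x) - Real.log (1 - x)) / x) x := by
  have hx' : |(-x)| < 1 := by rwa [abs_neg]
  have h1 := li2_hasDerivAt hx
  have h2 := (li2_hasDerivAt hx').comp x (hasDerivAt_neg x)
  have h := h1.sub h2
  have e1 := tsum_deriv_eq hx hx0
  have e2 := tsum_deriv_eq hx' (neg_ne_zero.2 hx0)
  rw [e1, e2] at h
  refine h.congr_deriv ?_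
  rw [sub_neg_eq_add]
  field_simp
  ring

noncomputable def FF (x : ℝ) : ℝ :=
    gg x + gg ((1 - x) / (1 + x)) + Real.log x * Real.log ((1 - x) / (1 + x))

lemma FF_deriv {x : ℝ} (hx : x ∈ Ioo (0:ℝ) 1) : HasDerivAt FF 0 x := by
  obtain ⟨hx0, hx1⟩ := hx
  set y : ℝ := (1 - x) / (1 + x) with hy
  have h1x : (0:ℝ) < 1 + x := by linarith
  have h1x' : (0:ℝ) < 1 - x := by linarith
  have hy0 : 0 < y := div_pos h1x' h1x
  have hy1 : y < 1 := by
    rw [hy, div_lt_one h1x]; linarith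
  have hyabs : |y| < 1 := by rw [abs_of_pos hy0]; exact hy1
  have hxabs : |x| < 1 := by rw [abs_of_pos hx0]; exact hx1
  have hy' : HasDerivAt (fun t : ℝ => (1 - t) / (1 + t)) (-2 / (1 + x) ^ 2) x := by
    have hnum : HasDerivAt (fun t : ℝ => 1 - t) (-1) x := by
      simpa using (hasDerivAt_id x).const_sub 1
    have hden : HasDerivAt (fun t : ℝ => 1 + t) 1 x := by
      simpa using (hasDerivAt_id x).const_add 1
    have := hnum.div hden (ne_of_gt h1x)
    refine this.congr_deriv ?_
    field_simp
    ring
  have hgx := gg_hasDerivAt hxabs (ne_of_gt hx0)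
  have hgy := (gg_hasDerivAt hyabs (ne_of_gt hy0)).comp x hy'
  have hlogx : HasDerivAt Real.log x⁻¹ x := Real.hasDerivAt_log (ne_of_gt hx0)
  have hlogy := (Real.hasDerivAt_log (ne_of_gt hy0)).comp x hy'
  have hprod := hlogx.mul hlogy
  have htot := (hgx.add hgy).add hprod
  have key : (Real.log (1 + x) - Real.log (1 - x)) / x +
      (Real.log (1 + y) - Real.log (1 - y)) / y * (-2 / (1 + x) ^ 2) +
      (x⁻¹ * Real.log y + Real.log x * (y⁻¹ * (-2 / (1 + x) ^ 2))) = 0 := by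
    have e1 : Real.log y = Real.log (1 - x) - Real.log (1 + x) :=
      Real.log_div (ne_of_gt h1x') (ne_of_gt h1x)
    have e2 : (1 : ℝ) + y = 2 / (1 + x) := by
      rw [hy]; field_simp; ring
    have e3 : (1 : ℝ) - y = 2 * x / (1 + x) := by
      rw [hy]; field_simp; ring
    have e4 : Real.log (1 + y) = Real.log 2 - Real.log (1 + x) := by
      rw [e2, Real.log_div two_ne_zero (ne_of_gt h1x)]
    have e5 : Real.log (1 - y) = Real.log 2 + Real.log x - Real.log (1 + x) := by
      rw [e3, Real.log_div (by positivity) (ne_of_gt h1x),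
        Real.log_mul two_ne_zero (ne_of_gt hx0)]
    rw [e1, e4, e5]
    have hyne : y ≠ 0 := ne_of_gt hy0
    field_simp
    ring
  have : HasDerivAt FF ((Real.log (1 + x) - Real.log (1 - x)) / x +
      (Real.log (1 + y) - Real.log (1 - y)) / y * (-2 / (1 + x) ^ 2) +
      (x⁻¹ * Real.log y + Real.log x * (y⁻¹ * (-2 / (1 + x) ^ 2)))) x := htot
  rw [key] at this
  exact this



lemma FF_const {x z : ℝ} (hx : x ∈ Ioo (0:ℝ) 1) (hz : z ∈ Ioo (0:ℝ) 1) : FF x = FF z := by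
  wlog h : x ≤ z generalizing x z
  · exact (this hz hx (le_of_not_ge h)).symm
  have hsub : Icc x z ⊆ Ioo (0:ℝ) 1 := fun w hw => ⟨lt_of_lt_of_le hx.1 hw.1, lt_of_le_of_lt hw.2 hz.2⟩
  have hcont : ContinuousOn FF (Icc x z) := fun w hw =>
    ((FF_deriv (hsub hw)).continuousAt).continuousWithinAt
  have hderiv : ∀ w ∈ Ico x z, HasDerivWithinAt FF 0 (Ici w) w := fun w hw =>
    (FF_deriv (hsub ⟨hw.1, hw.2.le⟩)).hasDerivWithinAt
  exact (constant_of_has_deriv_right_zero hcont hderiv z ⟨h, le_refl z⟩).symm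

lemma gg_continuousOn : ContinuousOn gg (Icc (-1:ℝ) 1) := by
  apply li2_continuousOn.sub
  apply li2_continuousOn.comp continuous_neg.continuousOn
  intro w hw
  simp only [mem_Icc] at hw ⊢
  constructor <;> linarith [hw.1, hw.2]

lemma gg_zero : gg 0 = 0 := by simp [gg, li2_zero]

lemma FF_tendsto : Tendsto FF (𝓝[>] (0:ℝ)) (𝓝 (gg 1)) := by
  have hmem : Ioo (0:ℝ) 1 ∈ 𝓝[>] (0:ℝ) := Ioo_mem_nhdsGT_of_mem ⟨le_refl 0, one_pos⟩
  -- part a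
  have ha : Tendsto gg (𝓝[>] (0:ℝ)) (𝓝 0) := by
    have : ContinuousAt gg 0 := by
      have h1 := (li2_hasDerivAt (x := 0) (by norm_num)).continuousAt
      have h2 := ((li2_hasDerivAt (x := (-0:ℝ)) (by norm_num)).comp 0 (hasDerivAt_neg 0)).continuousAt
      exact (h1.sub (by simpa [Function.comp_def] using h2))
    have ht : Tendsto gg (𝓝[>] (0:ℝ)) (𝓝 (gg 0)) :=
      (this.continuousWithinAt (s := Ioi (0:ℝ))).tendsto
    rwa [gg_zero] at ht
  -- part b
  have hyt : Tendsto (fun x : ℝ => (1 - x) / (1 + x)) (𝓝[>] (0:ℝ)) (𝓝[Icc (-1:ℝ) 1] 1) := by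
    apply tendsto_nhdsWithin_of_tendsto_nhds_of_eventually_within
    · have : ContinuousAt (fun x : ℝ => (1 - x) / (1 + x)) 0 := by
        apply ContinuousAt.div (by fun_prop) (by fun_prop)
        norm_num
      simpa using this.continuousWithinAt.tendsto
    · filter_upwards [hmem] with x hx
      have h1 : (0:ℝ) < 1 + x := by linarith [hx.1]
      constructor
      · have : (0:ℝ) < (1 - x) / (1 + x) := div_pos (by linarith [hx.2]) h1
        linarith
      · rw [div_le_one h1]; linarith [hx.1]
  have hb : Tendsto (fun x : ℝ => gg ((1 - x) / (1 + x))) (𝓝[>] (0:ℝ)) (𝓝 (gg 1)) :=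
    (gg_continuousOn 1 (by norm_num)).tendsto.comp hyt
  -- part c
  have hc : Tendsto (fun x : ℝ => Real.log x * Real.log ((1 - x) / (1 + x)))
      (𝓝[>] (0:ℝ)) (𝓝 0) := by
    have hbound : Tendsto (fun x : ℝ => 4 * |Real.log x * x|) (𝓝[>] (0:ℝ)) (𝓝 0) := by
      have h := (tendsto_log_mul_rpow_nhdsGT_zero one_pos)
      simp only [rpow_one] at h
      have := (h.abs).const_mul (4:ℝ)
      simpa using this
    apply squeeze_zero_norm' _ hbound
    have hmem2 : Ioo (0:ℝ) (1/2) ∈ 𝓝[>] (0:ℝ) := Ioo_mem_nhdsGT_of_mem ⟨le_refl 0, by norm_num⟩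
    filter_upwards [hmem2] with x hx
    obtain ⟨hx0, hx2⟩ := hx
    have h1x : (0:ℝ) < 1 + x := by linarith
    have h1x' : (0:ℝ) < 1 - x := by linarith
    have hlogy : Real.log ((1 - x) / (1 + x)) = Real.log (1 - x) - Real.log (1 + x) :=
      Real.log_div (ne_of_gt h1x') (ne_of_gt h1x)
    have hb1 : |Real.log (1 + x)| ≤ x := by
      rw [abs_of_nonneg (Real.log_nonneg (by linarith))]
      have := Real.log_le_sub_one_of_pos h1x
      linarith
    have hb2 : |Real.log (1 - x)| ≤ 2 * x := by
      rw [abs_of_nonpos (Real.log_nonpos (by linarith) (by linarith))]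
      have h := Real.log_le_sub_one_of_pos (x := (1 - x)⁻¹) (by positivity)
      rw [Real.log_inv] at h
      have hinv : (1 - x)⁻¹ - 1 ≤ 2 * x := by
        have heq : (1 - x)⁻¹ - 1 = x / (1 - x) := by field_simp; ring
        rw [heq, div_le_iff₀ h1x']
        nlinarith
      linarith
    have hylb : |Real.log ((1 - x) / (1 + x))| ≤ 4 * x := by
      rw [hlogy]
      calc |Real.log (1 - x) - Real.log (1 + x)| ≤ |Real.log (1 - x)| + |Real.log (1 + x)| :=
            abs_sub _ _
        _ ≤ 2 * x + x := add_le_add hb2 hb1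
        _ ≤ 4 * x := by linarith
    rw [Real.norm_eq_abs, abs_mul]
    calc |Real.log x| * |Real.log ((1 - x) / (1 + x))| ≤ |Real.log x| * (4 * x) := by
          gcongr
      _ = 4 * |Real.log x * x| := by
          rw [abs_mul, abs_of_pos hx0]; ring
  have := (ha.add hb).add hc
  rw [zero_add, add_zero] at this
  exact this



theorem dilog_sqrt2 :
    li2 (Real.sqrt 2 - 1) - li2 (1 - Real.sqrt 2) =
      Real.pi ^ 2 / 8 - (1 / 2) * (Real.log (Real.sqrt 2 + 1)) ^ 2 := by
  set s : ℝ := Real.sqrt 2 with hs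
  have hs2 : s ^ 2 = 2 := Real.sq_sqrt (by norm_num)
  have hs0 : 0 ≤ s := Real.sqrt_nonneg 2
  have hs1 : 1 < s := by nlinarith
  have hslt2 : s < 2 := by nlinarith
  set a : ℝ := s - 1 with ha
  have haI : a ∈ Ioo (0:ℝ) 1 := ⟨by simp [ha]; linarith, by simp [ha]; linarith⟩
  have ha1 : (0:ℝ) < 1 + a := by linarith [haI.1]
  -- y(a) = a
  have hya : (1 - a) / (1 + a) = a := by
    rw [ha]
    rw [div_eq_iff (by linarith : (1:ℝ) + (s - 1) ≠ 0)]
    nlinarith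
  -- log a = - log (s + 1)
  have hainv : a = (s + 1)⁻¹ := by
    have h : (s - 1) * (s + 1) = 1 := by nlinarith
    rw [ha]
    exact eq_inv_of_mul_eq_one_left h
  have hloga : Real.log a = - Real.log (s + 1) := by
    rw [hainv, Real.log_inv]
  -- FF a = gg 1
  have hFa : FF a = gg 1 := by
    have hconst : ∀ᶠ x in 𝓝[>] (0:ℝ), FF x = FF a := by
      filter_upwards [Ioo_mem_nhdsGT_of_mem (Set.mem_Ico.2 ⟨le_refl (0:ℝ), one_pos⟩)] with x hx
      exact FF_const hx haI
    have h1 : Tendsto FF (𝓝[>] (0:ℝ)) (𝓝 (FF a)) := by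
      refine Tendsto.congr' (hconst.mono fun x hx => hx.symm) tendsto_const_nhds
    exact tendsto_nhds_unique h1 FF_tendsto
  have hgg1 : gg 1 = π ^ 2 / 4 := g_one
  have hFa2 : FF a = 2 * gg a + (Real.log (s + 1)) ^ 2 := by
    rw [FF, hya, hloga]
    ring
  have hga : gg a = π ^ 2 / 8 - (1 / 2) * (Real.log (s + 1)) ^ 2 := by
    rw [hFa2, hgg1] at hFa
    linarith
  have : (1 : ℝ) - s = -a := by rw [ha]; ring
  rw [this] at *
  exact hga
end

section
/- For w = 1/φ with φ the golden ratio, as y → 0 one has log|w²/(1−w)| evaluated at w = φ^{−1−iy} equal to −((2+√5)/2) log²(φ) · y² + O(y⁴); in particular, Re Log(w²/(1−w)) ≤ 0 for all sufficiently small real y. -/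
open Asymptotics Filter

/-- The golden ratio. -/
noncomputable def φ : ℝ := (1 + Real.sqrt 5) / 2

/-- `w(y) = φ^{−1−iy} = e^{−(1+iy)log φ}`. -/
noncomputable def w (y : ℝ) : ℂ :=
  Complex.exp (-(1 + Complex.I * y) * Real.log φ)

private lemma sqrt5_sq : Real.sqrt 5 ^ 2 = 5 := Real.sq_sqrt (by norm_num)

private lemma sqrt5_gt : 2 < Real.sqrt 5 := by
  nlinarith [sqrt5_sq, Real.sqrt_nonneg 5]

private lemma φ_gt_one : 1 < φ := by unfold φ; nlinarith [sqrt5_gt]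

private lemma φ_pos : 0 < φ := lt_trans one_pos φ_gt_one

private lemma φ_sq : φ ^ 2 = φ + 1 := by unfold φ; nlinarith [sqrt5_sq]

private lemma φ_cube : φ ^ 3 = 2 + Real.sqrt 5 := by
  have h2 : φ ^ 3 = 2 * φ + 1 := by nlinarith [φ_sq]
  rw [h2]; unfold φ; ring

private lemma L_pos : 0 < Real.log φ := Real.log_pos φ_gt_one

private lemma w_re (y : ℝ) : (w y).re = φ⁻¹ * Real.cos (y * Real.log φ) := by
  unfold w
  rw [Complex.exp_re]
  have h1 : ((-(1 + Complex.I * y) * (Real.log φ : ℂ))).re = -Real.log φ := by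
    simp [Complex.mul_re]
  have h2 : ((-(1 + Complex.I * y) * (Real.log φ : ℂ))).im = -(y * Real.log φ) := by
    simp [Complex.mul_im]
  rw [h1, h2, Real.cos_neg, Real.exp_neg, Real.exp_log φ_pos]

private lemma w_im (y : ℝ) : (w y).im = -(φ⁻¹ * Real.sin (y * Real.log φ)) := by
  unfold w
  rw [Complex.exp_im]
  have h1 : ((-(1 + Complex.I * y) * (Real.log φ : ℂ))).re = -Real.log φ := by
    simp [Complex.mul_re]
  have h2 : ((-(1 + Complex.I * y) * (Real.log φ : ℂ))).im = -(y * Real.log φ) := by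
    simp [Complex.mul_im]
  rw [h1, h2, Real.sin_neg, Real.exp_neg, Real.exp_log φ_pos]; ring

private lemma normSq_one_sub_w (y : ℝ) :
    Complex.normSq (1 - w y) =
      φ⁻¹ ^ 4 * (1 + 2 * φ ^ 3 * (1 - Real.cos (y * Real.log φ))) := by
  have hs := Real.sin_sq_add_cos_sq (y * Real.log φ)
  have hne : φ ≠ 0 := ne_of_gt φ_pos
  have hc2 : φ⁻¹ ^ 2 = 1 - φ⁻¹ := by
    field_simp
    linear_combination -1 * φ_sq
  have hc3 : φ⁻¹ ^ 4 * φ ^ 3 = φ⁻¹ := by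
    field_simp
  rw [Complex.normSq_apply, Complex.sub_re, Complex.sub_im, w_re, w_im,
    Complex.one_re, Complex.one_im]
  linear_combination (φ⁻¹ ^ 2) * hs + (2 * Real.cos (y * Real.log φ) - 2) * hc3 +
    (-φ⁻¹ ^ 2 + φ⁻¹ - 1) * hc2

private lemma u_nonneg (y : ℝ) : 0 ≤ 2 * φ ^ 3 * (1 - Real.cos (y * Real.log φ)) := by
  have h1 : Real.cos (y * Real.log φ) ≤ 1 := Real.cos_le_one _
  have h2 : (0:ℝ) < φ ^ 3 := pow_pos φ_pos 3
  nlinarith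

private lemma key (y : ℝ) :
    Real.log ‖(w y) ^ 2 / (1 - w y)‖ =
      -(1/2) * Real.log (1 + 2 * φ ^ 3 * (1 - Real.cos (y * Real.log φ))) := by
  set u := 2 * φ ^ 3 * (1 - Real.cos (y * Real.log φ)) with hu_def
  have hu0 : 0 ≤ u := u_nonneg y
  have h1u : (0:ℝ) < 1 + u := by linarith
  have habs_w : ‖w y‖ = φ⁻¹ := by
    unfold w
    rw [Complex.norm_exp]
    have h1 : ((-(1 + Complex.I * y) * (Real.log φ : ℂ))).re = -Real.log φ := by
      simp [Complex.mul_re]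
    rw [h1, Real.exp_neg, Real.exp_log φ_pos]
  have hcpos : (0:ℝ) < φ⁻¹ := inv_pos.mpr φ_pos
  have habs1w : ‖1 - w y‖ = φ⁻¹ ^ 2 * Real.sqrt (1 + u) := by
    rw [Complex.norm_def, normSq_one_sub_w y, ← hu_def,
      Real.sqrt_mul (by positivity) _,
      show φ⁻¹ ^ 4 = (φ⁻¹ ^ 2) ^ 2 by ring, Real.sqrt_sq (by positivity)]
  have hsqrt_pos : (0:ℝ) < Real.sqrt (1 + u) := Real.sqrt_pos.mpr h1u
  rw [norm_div, norm_pow, habs_w, habs1w]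
  have hq : φ⁻¹ ^ 2 / (φ⁻¹ ^ 2 * Real.sqrt (1 + u)) = (Real.sqrt (1 + u))⁻¹ := by
    rw [div_mul_cancel_left₀ (by positivity : φ⁻¹ ^ 2 ≠ 0)]
  rw [hq, Real.log_inv, Real.log_sqrt (le_of_lt h1u)]
  ring

set_option maxHeartbeats 1600000 in
theorem log_abs_w_expansion :
    ((fun y : ℝ =>
        Real.log ‖(w y) ^ 2 / (1 - w y)‖ +
          (2 + Real.sqrt 5) / 2 * Real.log φ ^ 2 * y ^ 2) =O[nhds 0]
      fun y : ℝ => y ^ 4) ∧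
      ∃ δ > 0, ∀ y : ℝ, |y| < δ → (Complex.log ((w y) ^ 2 / (1 - w y))).re ≤ 0 := by
  set L := Real.log φ with hL_def
  have hL : 0 < L := L_pos
  have hφ3 : (0:ℝ) < φ ^ 3 := pow_pos φ_pos 3
  constructor
  · rw [Asymptotics.isBigO_iff]
    refine ⟨φ ^ 3 * (5/96) * L ^ 4 + φ ^ 6 * L ^ 4 / 2, ?_⟩
    filter_upwards [Metric.ball_mem_nhds (0:ℝ) (by positivity : (0:ℝ) < L⁻¹)] with y hy
    rw [Metric.mem_ball, Real.dist_eq, sub_zero] at hy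
    set t := y * L with ht_def
    have ht1 : |t| ≤ 1 := by
      rw [ht_def, abs_mul, abs_of_pos hL]
      calc |y| * L ≤ L⁻¹ * L := by
            apply mul_le_mul_of_nonneg_right (le_of_lt hy) (le_of_lt hL)
        _ = 1 := inv_mul_cancel₀ (ne_of_gt hL)
    set u := 2 * φ ^ 3 * (1 - Real.cos t) with hu_def
    have hu0 : 0 ≤ u := u_nonneg y
    have h1u : (0:ℝ) < 1 + u := by linarith
    have hcos1 : Real.cos t ≤ 1 := Real.cos_le_one t
    have hcos2 : 1 - t ^ 2 / 2 ≤ Real.cos t := Real.one_sub_sq_div_two_le_cos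
    have huB : u ≤ φ ^ 3 * t ^ 2 := by rw [hu_def]; nlinarith
    have hbound := Real.cos_bound ht1
    have hA : |φ ^ 3 * L ^ 2 * y ^ 2 - u| ≤ 2 * φ ^ 3 * (5/96) * (y ^ 4 * L ^ 4) := by
      have heq : φ ^ 3 * L ^ 2 * y ^ 2 - u = 2 * φ ^ 3 * (Real.cos t - (1 - t ^ 2 / 2)) := by
        rw [hu_def, ht_def]; ring
      rw [heq, abs_mul, abs_of_nonneg (by positivity : (0:ℝ) ≤ 2 * φ ^ 3)]
      have ht4 : |t| ^ 4 = y ^ 4 * L ^ 4 := by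
        rw [ht_def, abs_mul, abs_of_pos hL, mul_pow, ← abs_pow,
          abs_of_nonneg (by positivity : (0:ℝ) ≤ y ^ 4)]
      nlinarith [hbound, abs_nonneg (Real.cos t - (1 - t ^ 2 / 2))]
    -- log bounds
    have hlog_up : Real.log (1 + u) ≤ u := by
      have := Real.log_le_sub_one_of_pos h1u; linarith
    have hlog_lo : u - u ^ 2 ≤ Real.log (1 + u) := by
      have hinvpos : (0:ℝ) < (1 + u)⁻¹ := inv_pos.mpr h1u
      have h5 := Real.log_le_sub_one_of_pos hinvpos
      rw [Real.log_inv] at h5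
      have hinv : (1 + u) * (1 + u)⁻¹ = 1 := mul_inv_cancel₀ (ne_of_gt h1u)
      nlinarith [mul_nonneg (mul_nonneg hu0 hu0) hu0, mul_pos h1u hinvpos]
    have hB : |u - Real.log (1 + u)| ≤ φ ^ 6 * (y ^ 4 * L ^ 4) := by
      rw [abs_of_nonneg (by linarith)]
      have hu2 : u ^ 2 ≤ (φ ^ 3 * t ^ 2) ^ 2 := by nlinarith
      have ht4 : (φ ^ 3 * t ^ 2) ^ 2 = φ ^ 6 * (y ^ 4 * L ^ 4) := by
        have h6 : t ^ 2 * t ^ 2 = y ^ 4 * L ^ 4 := by rw [ht_def]; ring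
        linear_combination φ ^ 6 * h6
      nlinarith
    simp only [Real.norm_eq_abs]
    rw [key y, ← hL_def, ← ht_def, ← hu_def,
      abs_of_nonneg (by positivity : (0:ℝ) ≤ y ^ 4)]
    have hsplit : -(1/2) * Real.log (1 + u) + (2 + Real.sqrt 5) / 2 * L ^ 2 * y ^ 2 =
        (1/2) * (φ ^ 3 * L ^ 2 * y ^ 2 - u) + (1/2) * (u - Real.log (1 + u)) := by
      rw [φ_cube]; ring
    rw [hsplit]
    calc |(1/2) * (φ ^ 3 * L ^ 2 * y ^ 2 - u) + (1/2) * (u - Real.log (1 + u))|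
        ≤ |(1/2) * (φ ^ 3 * L ^ 2 * y ^ 2 - u)| + |(1/2) * (u - Real.log (1 + u))| :=
          abs_add_le _ _
      _ = (1/2) * |φ ^ 3 * L ^ 2 * y ^ 2 - u| + (1/2) * |u - Real.log (1 + u)| := by
          rw [abs_mul, abs_mul, abs_of_nonneg (show (0:ℝ) ≤ 1/2 by norm_num)]
      _ ≤ (φ ^ 3 * (5/96) * L ^ 4 + φ ^ 6 * L ^ 4 / 2) * y ^ 4 := by nlinarith [hA, hB]
  · refine ⟨1, one_pos, fun y _ => ?_⟩
    rw [Complex.log_re, key y]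
    have hu0 := u_nonneg y
    have hlog : 0 ≤ Real.log (1 + 2 * φ ^ 3 * (1 - Real.cos (y * Real.log φ))) :=
      Real.log_nonneg (by linarith)
    linarith
end
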